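/- arXiv:2011.07726 — 5 statements merged into one kernel-verified Lean document; each statement's English description precedes it below -/
import Mathlib

section
/- Let x_1,…,x_n and y_1,…,y_n be distinct complex numbers (with x_i ≠ y_j for all i,j), and let C be the Cauchy matrix with entries C_{ij} = 1/(x_i - y_j). Then for any functions f, g : ℂ → ℂ, det[C_{ij} + f(x_i)g(y_j)] = det C · (1 − ∑_{k,ℓ=1}^n f(x_ℓ) B(x_ℓ) A(y_k) g(y_k) / ((x_ℓ − y_k) A'(x_ℓ) B'(y_k))), where A(z) = ∏_{i=1}^n (z − x_i) and B(z) = ∏_{i=1}^n (z − y_i). -/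
/-!
The Cauchy matrix `C` has the explicit inverse
`K_{jℓ} = -B(x_ℓ) A(y_j) / ((x_ℓ - y_j) A'(x_ℓ) B'(y_j))`: the identity `C K = 1` is the partial
fraction expansion of `A(z) / ((z - x_ℓ) B(z))`, whose numerator has degree `< n`, evaluated at
`z = x_i`. The matrix determinant lemma `det (C + u vᵀ) = det C · (1 + vᵀ C⁻¹ u)` with
`u = f ∘ x`, `v = g ∘ y` then gives the formula.
-/

open Finset Matrix Polynomial Lagrange

theorem det_add_replicateCol_mul_replicateRow_of_mul_eq_one {m R : Type*} [Fintype m]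
    [DecidableEq m] [CommRing R] {M K : Matrix m m R} (hMK : M * K = 1) (u v : m → R) :
    (M + replicateCol Unit u * replicateRow Unit v).det = M.det * (1 + v ⬝ᵥ K *ᵥ u) := by
  have hfactor : M + replicateCol Unit u * replicateRow Unit v =
      M * (1 + replicateCol Unit (K *ᵥ u) * replicateRow Unit v) := by
    rw [Matrix.mul_add, Matrix.mul_one, replicateCol_mulVec, ← Matrix.mul_assoc,
      ← Matrix.mul_assoc, hMK, Matrix.one_mul]
  rw [hfactor, det_mul, det_one_add_replicateCol_mul_replicateRow]

section Cauchy

variable {F ι : Type*} [Field F] [Fintype ι] [DecidableEq ι]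

theorem eval_div_prod_sub_eq_sum_nodalWeight {y : ι → F} (hy : Function.Injective y) {P : F[X]}
    (hP : P.degree < Fintype.card ι) {z : F} (hz : ∀ j, z ≠ y j) :
    P.eval z / ∏ j, (z - y j) = ∑ j, nodalWeight univ y j * P.eval (y j) / (z - y j) := by
  have hB : ∏ j, (z - y j) ≠ 0 := prod_ne_zero_iff.mpr fun j _ => sub_ne_zero.mpr (hz j)
  nth_rw 1 [eq_interpolate hy.injOn hP]
  rw [eval_interpolate_not_at_node _ fun j _ => hz j, eval_nodal,
    mul_div_cancel_left₀ _ hB]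
  refine sum_congr rfl fun j _ => ?_
  rw [div_eq_mul_inv]
  ring

def cauchyMatrix (x y : ι → F) : Matrix ι ι F :=
  of fun i j => 1 / (x i - y j)

def cauchyInvMatrix (x y : ι → F) : Matrix ι ι F :=
  of fun j ℓ => nodalWeight univ x ℓ * nodalWeight univ y j * (∏ i, (x ℓ - y i)) *
    ∏ i ∈ univ.erase ℓ, (y j - x i)

theorem cauchyMatrix_mul_cauchyInvMatrix {x y : ι → F} (hx : Function.Injective x)
    (hy : Function.Injective y) (hxy : ∀ i j, x i ≠ y j) :
    cauchyMatrix x y * cauchyInvMatrix x y = 1 := by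
  ext i ℓ
  have hB : ∀ k, ∏ j, (x k - y j) ≠ 0 := fun k =>
    prod_ne_zero_iff.mpr fun j _ => sub_ne_zero.mpr (hxy k j)
  have hdeg : (nodal (univ.erase ℓ) x).degree < Fintype.card ι := by
    rw [degree_nodal, Nat.cast_lt]
    exact card_erase_lt_of_mem (mem_univ ℓ)
  have hpf := eval_div_prod_sub_eq_sum_nodalWeight hy hdeg (hxy i)
  simp only [eval_nodal] at hpf
  calc (cauchyMatrix x y * cauchyInvMatrix x y) i ℓ
      = nodalWeight univ x ℓ * (∏ j, (x ℓ - y j)) *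
          ∑ j, nodalWeight univ y j * (∏ k ∈ univ.erase ℓ, (y j - x k)) / (x i - y j) := by
        simp only [mul_apply, cauchyMatrix, cauchyInvMatrix, of_apply, mul_sum]
        refine sum_congr rfl fun j _ => ?_
        ring
    _ = nodalWeight univ x ℓ * (∏ j, (x ℓ - y j)) *
          ((∏ k ∈ univ.erase ℓ, (x i - x k)) / ∏ j, (x i - y j)) := by rw [hpf]
    _ = (1 : Matrix ι ι F) i ℓ := by
        obtain rfl | hiℓ := eq_or_ne i ℓ
        · have hA : ∏ k ∈ univ.erase i, (x i - x k) ≠ 0 := prod_ne_zero_iff.mpr fun k hk =>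
            sub_ne_zero.mpr (hx.ne (ne_of_mem_erase hk).symm)
          rw [one_apply_eq, nodalWeight_eq_eval_nodal_erase_inv, eval_nodal]
          field_simp [hB i]
        · rw [one_apply_ne hiℓ, prod_eq_zero (mem_erase.mpr ⟨hiℓ, mem_univ i⟩) (sub_self _),
            zero_div, mul_zero]

end Cauchy

theorem deriv_prod_sub_eq_inv_nodalWeight {𝕜 ι : Type*} [NontriviallyNormedField 𝕜] [Fintype ι]
    [DecidableEq ι] (x : ι → 𝕜) (ℓ : ι) :
    deriv (fun z => ∏ i, (z - x i)) (x ℓ) = (nodalWeight univ x ℓ)⁻¹ := by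
  have hnodal : (fun z => ∏ i, (z - x i)) = fun z => (nodal univ x).eval z := by
    funext z; rw [eval_nodal]
  rw [hnodal, Polynomial.deriv, nodalWeight_eq_eval_derivative_nodal (mem_univ ℓ), inv_inv]

theorem cauchyInvMatrix_apply {𝕜 ι : Type*} [NontriviallyNormedField 𝕜] [Fintype ι]
    [DecidableEq ι] {x y : ι → 𝕜} (hxy : ∀ i j, x i ≠ y j) (j ℓ : ι) :
    cauchyInvMatrix x y j ℓ = -((∏ i, (x ℓ - y i)) * (∏ i, (y j - x i)) /
      ((x ℓ - y j) * deriv (fun z => ∏ i, (z - x i)) (x ℓ) *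
        deriv (fun z => ∏ i, (z - y i)) (y j))) := by
  have hℓj : x ℓ - y j ≠ 0 := sub_ne_zero.mpr (hxy ℓ j)
  rw [deriv_prod_sub_eq_inv_nodalWeight, deriv_prod_sub_eq_inv_nodalWeight,
    ← mul_prod_erase univ (fun i => y j - x i) (mem_univ ℓ), cauchyInvMatrix, of_apply]
  field_simp
  ring

/-- Rank-one perturbation of a Cauchy determinant:
`det(C + f(x_i)g(y_j)) = det C · (1 − ∑_{k,ℓ} f(x_ℓ)B(x_ℓ)A(y_k)g(y_k)/((x_ℓ−y_k)A'(x_ℓ)B'(y_k)))`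
with `A(z) = ∏ (z − x_i)`, `B(z) = ∏ (z − y_i)`. -/
theorem cauchy_rank_one_perturbation
    (n : ℕ) (x y : Fin n → ℂ) (f g : ℂ → ℂ)
    (hx : Function.Injective x) (hy : Function.Injective y)
    (hxy : ∀ i j, x i ≠ y j) :
    Matrix.det (Matrix.of fun i j : Fin n => 1 / (x i - y j) + f (x i) * g (y j)) =
      Matrix.det (Matrix.of fun i j : Fin n => 1 / (x i - y j)) *
        (1 - ∑ k : Fin n, ∑ ℓ : Fin n,
          f (x ℓ) * (∏ i, (x ℓ - y i)) * (∏ i, (y k - x i)) * g (y k) /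
            ((x ℓ - y k) * deriv (fun z => ∏ i, (z - x i)) (x ℓ) *
              deriv (fun z => ∏ i, (z - y i)) (y k))) := by
  have hperturbed : (of fun i j => 1 / (x i - y j) + f (x i) * g (y j)) =
      cauchyMatrix x y + replicateCol Unit (f ∘ x) * replicateRow Unit (g ∘ y) := by
    ext i j
    simp [cauchyMatrix, Matrix.mul_apply]
  rw [hperturbed, det_add_replicateCol_mul_replicateRow_of_mul_eq_one
    (cauchyMatrix_mul_cauchyInvMatrix hx hy hxy), cauchyMatrix, sub_eq_add_neg,
    ← sum_neg_distrib]
  congr 2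
  simp only [dotProduct, mulVec, mul_sum, ← sum_neg_distrib, cauchyInvMatrix_apply hxy]
  refine sum_congr rfl fun k _ => sum_congr rfl fun ℓ _ => ?_
  simp only [Function.comp_apply]
  ring
end

section
/- Let x_1,…,x_n, y_1,…,y_n be distinct complex numbers (x_i ≠ y_j, all distinct among themselves, none equal to −1), let C be the Cauchy matrix with C_{ij} = 1/(x_i − y_j), A(z) = ∏_i (z − x_i), B(z) = ∏_i (z − y_i). Then ∑_{k,ℓ=1}^n (−1)^{ℓ+k} det(C^{ℓ,k}) · 1/(x_ℓ + 1) = det(C) · (1 − B(−1)/A(−1)). -/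
/-!
By cofactor expansion along column `k`, the inner sum over `ℓ` is the Cramer determinant
`det C · c_k`, where `C c = u` with `u_ℓ = 1/(x_ℓ - z)` and `z = -1`; so the claim is
`∑ c_k = 1 - B(z)/A(z)`. Interpolating `A` on the nodes `z, y_j` (one more than its degree)
gives the partial fraction expansion `A(t)/((t - z) B(t)) = α/(t - z) + ∑ β_j/(t - y_j)` with
`α + ∑ β_j = 1` (leading coefficient) and `α = A(z)/B(z)`. Evaluating at the roots `x_i` of `A`
shows that `c = -β/α` solves the system, and then `∑ c_k = -(1 - α)/α = 1 - B(z)/A(z)`.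
-/

open Polynomial Finset

namespace Lagrange
variable {F ι : Type*} [Field F] [DecidableEq ι]

theorem sum_nodalWeight_mul_inv_sub_mul_eval_eq_zero {s : Finset ι} {v : ι → F}
    (hvs : Set.InjOn v s) {P : F[X]} (hP : P.degree < #s) {x : F} (hx : ∀ i ∈ s, x ≠ v i)
    (hroot : P.IsRoot x) :
    ∑ i ∈ s, nodalWeight s v i * (x - v i)⁻¹ * P.eval (v i) = 0 := by
  have h := eval_interpolate_not_at_node (fun i => P.eval (v i)) hx
  rw [← eq_interpolate hvs hP, hroot.eq_zero] at h
  exact (mul_eq_zero.mp h.symm).resolve_left (eval_nodal_not_at_node hx)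

theorem sum_nodalWeight_mul_eval_eq_one {s : Finset ι} {v : ι → F} (hvs : Set.InjOn v s)
    {P : F[X]} (hP : P.Monic) (hdeg : P.natDegree + 1 = #s) :
    ∑ i ∈ s, nodalWeight s v i * P.eval (v i) = 1 := by
  have hlt : P.degree < #s :=
    degree_le_natDegree.trans_lt (by exact_mod_cast (by omega : P.natDegree < #s))
  rw [← hP.coeff_natDegree, show P.natDegree = #s - 1 by omega, coeff_eq_sum hvs hlt]
  refine sum_congr rfl fun i _ => ?_
  rw [nodalWeight, prod_inv_distrib, div_eq_mul_inv, mul_comm]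

theorem nodalWeight_univ_none [Fintype ι] (v : Option ι → F) :
    nodalWeight univ v none = ∏ j, (v none - v (some j))⁻¹ := by
  have : (univ : Finset (Option ι)).erase none = univ.map .some := by ext (_ | _) <;> simp
  rw [nodalWeight, this, prod_map]
  rfl

end Lagrange

namespace Matrix
variable {n : Type*} [Fintype n] [DecidableEq n] {R : Type*} [CommRing R]

theorem cramer_eq_det_smul_of_mulVec_eq {A : Matrix n n R} {b c : n → R} (h : A *ᵥ c = b) :
    A.cramer b = A.det • c := by
  rw [← h, cramer_eq_adjugate_mulVec, mulVec_mulVec, adjugate_mul, smul_mulVec, one_mulVec]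

theorem cramer_succ_apply {m : ℕ} (A : Matrix (Fin (m + 1)) (Fin (m + 1)) R)
    (b : Fin (m + 1) → R) (k : Fin (m + 1)) :
    A.cramer b k = ∑ l : Fin (m + 1),
      (-1) ^ ((l : ℕ) + k) * b l * (A.submatrix l.succAbove k.succAbove).det := by
  rw [cramer_apply, det_succ_column _ k]
  simp only [updateCol_self, submatrix_updateCol_succAbove]

end Matrix

open Lagrange in
theorem exists_partial_fractions_eval_roots {ι F : Type*} [Fintype ι] [DecidableEq ι] [Field F]
    {x y : ι → F} {z : F} (hy : Function.Injective y) (hxy : ∀ i j, x i ≠ y j)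
    (hxz : ∀ i, x i ≠ z) (hyz : ∀ j, y j ≠ z) :
    ∃ β : ι → F, (∏ i, (z - x i)) / (∏ j, (z - y j)) + ∑ j, β j = 1 ∧
      ∀ i, (∏ i, (z - x i)) / (∏ j, (z - y j)) / (x i - z)
        + ∑ j, β j / (x i - y j) = 0 := by
  obtain ⟨v, hvz, hvy⟩ : ∃ v : Option ι → F, v none = z ∧ ∀ j, v (some j) = y j :=
    ⟨(Option.elim · z y), rfl, fun _ => rfl⟩
  have hv : Set.InjOn v (univ : Finset (Option ι)) := by
    rintro (_ | a) - (_ | b) - h <;> simp only [hvz, hvy] at h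
    exacts [rfl, absurd h.symm (hyz b), absurd h (hyz a), congrArg _ (hy h)]
  set A := nodal univ x
  have hdeg : A.natDegree + 1 = #(univ : Finset (Option ι)) := by
    rw [natDegree_nodal, card_univ, card_univ, Fintype.card_option]
  have hlt : A.degree < #(univ : Finset (Option ι)) :=
    degree_le_natDegree.trans_lt (by exact_mod_cast (by omega : A.natDegree < _))
  have hα : (∏ i, (z - x i)) / (∏ j, (z - y j)) = nodalWeight univ v none * A.eval z := by
    simp only [nodalWeight_univ_none, hvz, hvy, prod_inv_distrib, eval_nodal, A, div_eq_inv_mul]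
  refine ⟨fun j => nodalWeight univ v (some j) * A.eval (y j), ?_, fun i => ?_⟩
  · have h := sum_nodalWeight_mul_eval_eq_one hv nodal_monic hdeg
    simp only [Fintype.sum_option, hvz, hvy] at h
    rwa [hα]
  · have hxv : ∀ o ∈ univ, x i ≠ v o := by
      rintro (_ | j) - <;> simp only [hvz, hvy]
      exacts [hxz i, hxy i j]
    have h := sum_nodalWeight_mul_inv_sub_mul_eval_eq_zero hv hlt hxv
      (eval_nodal_at_node (mem_univ i))
    simp only [Fintype.sum_option, hvz, hvy] at h
    rw [hα]
    refine Eq.trans ?_ h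
    exact congrArg₂ (· + ·) (by ring) (sum_congr rfl fun j _ => by ring)

open Matrix in
theorem exists_cauchy_mulVec_eq_and_sum_eq {ι F : Type*} [Fintype ι] [DecidableEq ι] [Field F]
    {x y : ι → F} {z : F} (hy : Function.Injective y) (hxy : ∀ i j, x i ≠ y j)
    (hxz : ∀ i, x i ≠ z) (hyz : ∀ j, y j ≠ z) :
    ∃ c : ι → F, Matrix.of (fun i j => 1 / (x i - y j)) *ᵥ c = (fun i => 1 / (x i - z)) ∧
      ∑ j, c j = 1 - (∏ j, (z - y j)) / ∏ i, (z - x i) := by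
  obtain ⟨β, hsum, hroot⟩ := exists_partial_fractions_eval_roots hy hxy hxz hyz
  have hA : ∏ i, (z - x i) ≠ 0 := prod_ne_zero_iff.mpr fun i _ => sub_ne_zero.mpr (hxz i).symm
  have hB : ∏ j, (z - y j) ≠ 0 := prod_ne_zero_iff.mpr fun j _ => sub_ne_zero.mpr (hyz j).symm
  set α := (∏ i, (z - x i)) / (∏ j, (z - y j))
  have hα : α ≠ 0 := div_ne_zero hA hB
  refine ⟨fun j => -β j / α, funext fun i => ?_, ?_⟩
  · have hxz' : x i - z ≠ 0 := sub_ne_zero.mpr (hxz i)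
    calc ∑ j, 1 / (x i - y j) * (-β j / α) = -(∑ j, β j / (x i - y j)) / α := by
          rw [neg_div, sum_div, ← sum_neg_distrib]
          exact sum_congr rfl fun j _ => by ring
      _ = 1 / (x i - z) := by
          rw [eq_neg_of_add_eq_zero_right (hroot i)]
          field_simp
  · rw [← sum_div, sum_neg_distrib, eq_sub_of_add_eq' hsum, neg_div, sub_div, div_self hα,
      neg_sub, one_div, inv_div]

theorem cauchy_minor_weighted_sum_general (n : ℕ) (x y : Fin (n + 1) → ℂ)
    (hy : Function.Injective y)
    (hxy : ∀ i j, x i ≠ y j)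
    (hx1 : ∀ i, x i ≠ -1) (hy1 : ∀ j, y j ≠ -1) :
    ∑ k : Fin (n + 1), ∑ ℓ : Fin (n + 1),
      (-1 : ℂ) ^ ((ℓ : ℕ) + (k : ℕ)) *
        Matrix.det ((Matrix.of fun i j : Fin (n + 1) => 1 / (x i - y j)).submatrix
          ℓ.succAbove k.succAbove) * (1 / (x ℓ + 1)) =
    Matrix.det (Matrix.of fun i j : Fin (n + 1) => 1 / (x i - y j)) *
      (1 - (∏ i, ((-1 : ℂ) - y i)) / (∏ i, ((-1 : ℂ) - x i))) := by
  obtain ⟨c, hc, hsum⟩ := exists_cauchy_mulVec_eq_and_sum_eq (z := -1) hy hxy hx1 hy1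
  simp only [sub_neg_eq_add] at hc
  rw [← hsum, mul_sum]
  refine sum_congr rfl fun k _ => ?_
  rw [← smul_eq_mul, ← Pi.smul_apply, ← Matrix.cramer_eq_det_smul_of_mulVec_eq hc,
    Matrix.cramer_succ_apply]
  exact sum_congr rfl fun l _ => by ring

/-- Signed sum of Cauchy minors weighted by `1/(x_ℓ+1)`:
`∑_{k,ℓ} (−1)^{ℓ+k} det(C^{ℓ,k}) /(x_ℓ+1) = det C · (1 − B(−1)/A(−1))`. -/
theorem cauchy_minor_weighted_sum (n : ℕ) (x y : Fin (n + 1) → ℂ)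
    (hx : Function.Injective x) (hy : Function.Injective y)
    (hxy : ∀ i j, x i ≠ y j)
    (hx1 : ∀ i, x i ≠ -1) (hy1 : ∀ j, y j ≠ -1) :
    ∑ k : Fin (n + 1), ∑ ℓ : Fin (n + 1),
      (-1 : ℂ) ^ ((ℓ : ℕ) + (k : ℕ)) *
        Matrix.det ((Matrix.of fun i j : Fin (n + 1) => 1 / (x i - y j)).submatrix
          ℓ.succAbove k.succAbove) * (1 / (x ℓ + 1)) =
    Matrix.det (Matrix.of fun i j : Fin (n + 1) => 1 / (x i - y j)) *
      (1 - (∏ i, ((-1 : ℂ) - y i)) / (∏ i, ((-1 : ℂ) - x i))) :=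
  cauchy_minor_weighted_sum_general n x y hy hxy hx1 hy1
end

section
/- Let x_1,…,x_n, y_1,…,y_n be pairwise distinct complex numbers with x_i ≠ y_j, all nonzero, and none equal to −1 or −1/p for a fixed 0 < p < 1. With A(z) = ∏_i (z − x_i) and B(z) = ∏_i (z − y_i), the double sum ∑_{k,ℓ=1}^n [x_ℓ/((1+x_ℓ)(1+p x_ℓ))] · [B(x_ℓ)A(y_k)/((x_ℓ−y_k)A'(x_ℓ)B'(y_k))] · [(1+p y_k)/y_k] equals −(1/(1−p)) · [ (A(0)/B(0) − 1)·B(−1/p)/A(−1/p) + (p − A(0)/B(0))·B(−1)/A(−1) + 1 − p ]. -/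
/-!
Both summations are partial-fraction sums: for distinct nodes `r₀, …, r_m` and `deg P ≤ m`,
`∑ᵢ P(rᵢ) / ∏_{j ≠ i} (rᵢ - rⱼ)` is the coefficient of `z^m` in `P` (Lagrange interpolation).
For fixed `k`, the sum over `ℓ` is such a sum for `P(z) = z B(z) / (z - y_k)` on the nodes `x_ℓ`,
`-1`, `-1/p`; here the coefficient vanishes, so the sum is minus the contributions of `-1` and
`-1/p`, which are multiples of `1 / (y_k + 1)` and `1 / (y_k + 1/p)`. What remains are two sums
over `k` of the same kind, for `P(z) = (z + 1/p) A(z)` on the nodes `y_k`, `0`, `d` with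
`d ∈ {-1, -1/p}`, where the coefficient is `1`.
-/

open Polynomial Finset Lagrange Function

section ResidueSums

variable {F : Type*} [Field F]

theorem sum_div_prod_erase_sub_insert [DecidableEq F] (f : F → F) {s : Finset F} {a : F}
    (ha : a ∉ s) :
    ∑ r ∈ insert a s, f r / ∏ t ∈ (insert a s).erase r, (r - t) =
      f a / ∏ t ∈ s, (a - t) + ∑ r ∈ s, f r / (r - a) / ∏ t ∈ s.erase r, (r - t) := by
  rw [sum_insert ha, erase_insert ha]
  congr 1
  refine sum_congr rfl fun r hr => ?_
  have har : a ≠ r := fun h => ha (h ▸ hr)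
  rw [erase_insert_of_ne har, prod_insert fun h => ha (mem_of_mem_erase h), div_div]

variable {ι : Type*} [Fintype ι]

theorem eval_nodal_ne_zero {v : ι → F} {z : F} (hz : ∀ i, v i ≠ z) :
    (nodal univ v).eval z ≠ 0 := by
  rw [eval_nodal]
  exact prod_ne_zero_iff.2 fun i _ => sub_ne_zero.2 (hz i).symm

variable {x y : ι → F} {a q : F}

/-- The paper's summand, with `A = nodal univ x`, `B = nodal univ y` and the poles `-1`, `-1/p`
replaced by `a`, `q`: the factors `1 + p z` become `z - q`, and the powers of `p` cancel. -/
noncomputable def residueTerm (x y : ι → F) (a q : F) (k ℓ : ι) : F :=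
  x ℓ / ((x ℓ - a) * (x ℓ - q)) *
    ((nodal univ y).eval (x ℓ) * (nodal univ x).eval (y k) /
      ((x ℓ - y k) * (derivative (nodal univ x)).eval (x ℓ) *
        (derivative (nodal univ y)).eval (y k))) *
    ((y k - q) / y k)

theorem residueTerm_neg_one_neg_one_div {p : F} (hp : p ≠ 0) (k ℓ : ι) :
    residueTerm x y (-1) (-1 / p) k ℓ =
      x ℓ / ((1 + x ℓ) * (1 + p * x ℓ)) *
        ((nodal univ y).eval (x ℓ) * (nodal univ x).eval (y k) /
          ((x ℓ - y k) * (derivative (nodal univ x)).eval (x ℓ) *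
            (derivative (nodal univ y)).eval (y k))) *
        ((1 + p * y k) / y k) := by
  have hlin : ∀ z : F, 1 + p * z = p * (z - -1 / p) := fun z => by field_simp; ring
  rw [residueTerm, hlin, hlin, add_comm 1, ← sub_neg_eq_add]
  simp only [div_eq_mul_inv, mul_inv]
  field_simp

variable [DecidableEq ι]

theorem eval_derivative_nodal_univ (v : ι → F) (i : ι) :
    (derivative (nodal univ v)).eval (v i) = ∏ j ∈ univ.erase i, (v i - v j) := by
  rw [eval_nodal_derivative_eval_node_eq (mem_univ i), eval_nodal]

theorem sum_eval_div_mul_derivative_nodal {v : ι → F} (hv : Injective v) {a b : F}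
    (hab : a ≠ b) (ha : ∀ i, v i ≠ a) (hb : ∀ i, v i ≠ b) {P : F[X]}
    (hP : P.natDegree ≤ Fintype.card ι + 1) :
    ∑ i, P.eval (v i) / ((v i - a) * (v i - b) * (derivative (nodal univ v)).eval (v i)) =
      P.coeff (Fintype.card ι + 1) - P.eval a / ((a - b) * (nodal univ v).eval a) -
        P.eval b / ((b - a) * (nodal univ v).eval b) := by
  classical
  set T := univ.image v
  have haT : a ∉ T := by simpa [T] using ha
  have hbT : b ∉ T := by simpa [T] using hb
  have haT' : a ∉ insert b T := by simpa [hab] using haT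
  have hcard : #(insert a (insert b T)) = Fintype.card ι + 2 := by
    rw [card_insert_of_notMem haT', card_insert_of_notMem hbT, card_image_of_injective _ hv,
      card_univ]
  have hdeg : P.degree < #(insert a (insert b T)) := by
    rw [hcard]
    exact (degree_le_of_natDegree_le hP).trans_lt (by exact_mod_cast Nat.lt_succ_self _)
  have key := coeff_eq_sum (v := id) injective_id.injOn hdeg
  simp only [id] at key
  rw [hcard, sum_div_prod_erase_sub_insert _ haT', sum_div_prod_erase_sub_insert _ hbT,
    prod_insert hbT, sum_image hv.injOn] at key
  simp only [T, prod_image hv.injOn, ← image_erase hv, div_div] at key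
  rw [show Fintype.card ι + 2 - 1 = Fintype.card ι + 1 from rfl] at key
  simp only [eval_derivative_nodal_univ, eval_nodal, key]
  ring

theorem eval_nodal_eq_sub_mul_eval_nodal_erase (v : ι → F) (i : ι) (z : F) :
    (nodal univ v).eval z = (z - v i) * (nodal (univ.erase i) v).eval z := by
  rw [nodal_eq_mul_nodal_erase (mem_univ i), eval_mul, eval_sub, eval_X, eval_C]

theorem sum_mul_eval_nodal_erase_div (hx : Injective x) (haq : a ≠ q) (hxa : ∀ i, x i ≠ a)
    (hxq : ∀ i, x i ≠ q) (hya : ∀ i, y i ≠ a) (hyq : ∀ i, y i ≠ q) (k : ι) :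
    ∑ ℓ, x ℓ * (nodal (univ.erase k) y).eval (x ℓ) /
        ((x ℓ - a) * (x ℓ - q) * (derivative (nodal univ x)).eval (x ℓ)) =
      a * (nodal univ y).eval a / ((a - q) * (nodal univ x).eval a) / (y k - a) +
        q * (nodal univ y).eval q / ((q - a) * (nodal univ x).eval q) / (y k - q) := by
  have hdeg : (X * nodal (univ.erase k) y).natDegree ≤ Fintype.card ι := by
    refine natDegree_mul_le.trans ?_
    rw [natDegree_X, natDegree_nodal, card_erase_of_mem (mem_univ k), card_univ]
    have := Fintype.card_pos_iff.2 ⟨k⟩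
    omega
  have key := sum_eval_div_mul_derivative_nodal hx haq hxa hxq (hdeg.trans (Nat.le_succ _))
  rw [coeff_eq_zero_of_natDegree_lt (hdeg.trans_lt (Nat.lt_succ_self _))] at key
  simp only [eval_mul, eval_X] at key
  rw [key, eval_nodal_eq_sub_mul_eval_nodal_erase y k a,
    eval_nodal_eq_sub_mul_eval_nodal_erase y k q]
  have := eval_nodal_ne_zero hxa
  have := eval_nodal_ne_zero hxq
  have := sub_ne_zero.2 haq
  have := sub_ne_zero.2 haq.symm
  have := sub_ne_zero.2 (hya k)
  have := sub_ne_zero.2 (hyq k)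
  field_simp
  ring

theorem sum_sub_mul_eval_nodal_div (hy : Injective y) (hy0 : ∀ i, y i ≠ 0) {d : F}
    (hd : d ≠ 0) (hyd : ∀ i, y i ≠ d) :
    ∑ k, (y k - q) * (nodal univ x).eval (y k) /
        (y k * (derivative (nodal univ y)).eval (y k)) / (y k - d) =
      1 - q * (nodal univ x).eval 0 / (d * (nodal univ y).eval 0) -
        (d - q) * (nodal univ x).eval d / (d * (nodal univ y).eval d) := by
  have hmonic : ((X - C q) * nodal univ x).Monic := (monic_X_sub_C q).mul nodal_monic
  have hdeg : ((X - C q) * nodal univ x).natDegree = Fintype.card ι + 1 := by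
    rw [(monic_X_sub_C q).natDegree_mul nodal_monic, natDegree_X_sub_C, natDegree_nodal,
      card_univ, add_comm]
  have key := sum_eval_div_mul_derivative_nodal hy hd.symm hy0 hyd hdeg.le
  rw [← hdeg, hmonic.coeff_natDegree] at key
  simp only [eval_mul, eval_sub, eval_X, eval_C] at key
  convert key using 1
  · exact sum_congr rfl fun k _ => by rw [sub_zero, div_div, mul_right_comm]
  · ring

theorem residueTerm_eq_mul (hxy : ∀ i j, x i ≠ y j) (k ℓ : ι) :
    residueTerm x y a q k ℓ =
      x ℓ * (nodal (univ.erase k) y).eval (x ℓ) /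
          ((x ℓ - a) * (x ℓ - q) * (derivative (nodal univ x)).eval (x ℓ)) *
        ((y k - q) * (nodal univ x).eval (y k) /
          (y k * (derivative (nodal univ y)).eval (y k))) := by
  rw [residueTerm, eval_nodal_eq_sub_mul_eval_nodal_erase y k (x ℓ), mul_assoc (x ℓ - y k),
    mul_assoc (x ℓ - y k), mul_div_mul_left _ _ (sub_ne_zero.2 (hxy ℓ k))]
  simp only [div_eq_mul_inv, mul_inv]
  ring

theorem sum_residueTerm (hx : Injective x) (hxy : ∀ i j, x i ≠ y j) (haq : a ≠ q)
    (hxa : ∀ i, x i ≠ a) (hxq : ∀ i, x i ≠ q) (hya : ∀ i, y i ≠ a) (hyq : ∀ i, y i ≠ q)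
    (k : ι) :
    ∑ ℓ, residueTerm x y a q k ℓ =
      a * (nodal univ y).eval a / ((a - q) * (nodal univ x).eval a) *
          ((y k - q) * (nodal univ x).eval (y k) /
            (y k * (derivative (nodal univ y)).eval (y k)) / (y k - a)) +
        q * (nodal univ y).eval q / ((q - a) * (nodal univ x).eval q) *
          ((y k - q) * (nodal univ x).eval (y k) /
            (y k * (derivative (nodal univ y)).eval (y k)) / (y k - q)) := by
  simp only [residueTerm_eq_mul hxy, ← sum_mul,
    sum_mul_eval_nodal_erase_div hx haq hxa hxq hya hyq]
  ring

theorem sum_sum_residueTerm (hx : Injective x) (hy : Injective y) (hxy : ∀ i j, x i ≠ y j)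
    (hy0 : ∀ i, y i ≠ 0) (ha : a ≠ 0) (hq : q ≠ 0) (haq : a ≠ q) (hxa : ∀ i, x i ≠ a)
    (hxq : ∀ i, x i ≠ q) (hya : ∀ i, y i ≠ a) (hyq : ∀ i, y i ≠ q) :
    ∑ k, ∑ ℓ, residueTerm x y a q k ℓ =
      (a - q * ((nodal univ x).eval 0 / (nodal univ y).eval 0)) / (a - q) *
          ((nodal univ y).eval a / (nodal univ x).eval a) +
        q * (1 - (nodal univ x).eval 0 / (nodal univ y).eval 0) / (q - a) *
          ((nodal univ y).eval q / (nodal univ x).eval q) - 1 := by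
  simp only [sum_residueTerm hx hxy haq hxa hxq hya hyq, sum_add_distrib, ← mul_sum,
    sum_sub_mul_eval_nodal_div hy hy0 ha hya, sum_sub_mul_eval_nodal_div hy hy0 hq hyq]
  have := eval_nodal_ne_zero hxa
  have := eval_nodal_ne_zero hya
  have := eval_nodal_ne_zero hy0
  have := sub_ne_zero.2 haq
  have := sub_ne_zero.2 haq.symm
  field_simp
  ring

theorem sum_sum_residueTerm_neg_one_neg_one_div (hx : Injective x) (hy : Injective y)
    (hxy : ∀ i j, x i ≠ y j) (hy0 : ∀ i, y i ≠ 0) {p : F} (hp0 : p ≠ 0) (hp1 : p ≠ 1)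
    (hx1 : ∀ i, x i ≠ -1) (hy1 : ∀ i, y i ≠ -1) (hxp : ∀ i, x i ≠ -1 / p)
    (hyp : ∀ i, y i ≠ -1 / p) :
    ∑ k, ∑ ℓ, residueTerm x y (-1) (-1 / p) k ℓ =
      -(1 / (1 - p)) *
        (((nodal univ x).eval 0 / (nodal univ y).eval 0 - 1) *
            (nodal univ y).eval (-1 / p) / (nodal univ x).eval (-1 / p) +
          (p - (nodal univ x).eval 0 / (nodal univ y).eval 0) *
            (nodal univ y).eval (-1) / (nodal univ x).eval (-1) +
          1 - p) := by
  have hp1' : 1 - p ≠ 0 := sub_ne_zero.2 hp1.symm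
  have hq : -1 / p ≠ 0 := div_ne_zero (neg_ne_zero.2 one_ne_zero) hp0
  have haq : (-1 : F) - -1 / p = (1 - p) / p := by field_simp; ring
  have hqa : -1 / p - -1 = -((1 - p) / p) := by rw [← haq]; ring
  have haq' : (-1 : F) ≠ -1 / p := sub_ne_zero.1 (haq ▸ div_ne_zero hp1' hp0)
  rw [sum_sum_residueTerm hx hy hxy hy0 (neg_ne_zero.2 one_ne_zero) hq haq' hx1 hxp hy1 hyp,
    haq, hqa]
  have hA1 := eval_nodal_ne_zero hx1
  have hAq := eval_nodal_ne_zero hxp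
  have hB0 := eval_nodal_ne_zero hy0
  generalize (nodal univ x).eval (-1 / p) = Aq at hAq ⊢
  generalize (nodal univ y).eval (-1 / p) = Bq
  field_simp
  ring

end ResidueSums

theorem residue_double_sum_general (n : ℕ) (p : ℝ) (hp : 0 < p) (hp1 : p < 1)
    (x y : Fin n → ℂ)
    (hx : Function.Injective x) (hy : Function.Injective y)
    (hxy : ∀ i j, x i ≠ y j)
    (hy0 : ∀ i, y i ≠ 0)
    (hx1 : ∀ i, x i ≠ -1) (hy1 : ∀ i, y i ≠ -1)
    (hxp : ∀ i, x i ≠ -1 / (p : ℂ)) (hyp : ∀ i, y i ≠ -1 / (p : ℂ)) :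
    ∑ k : Fin n, ∑ ℓ : Fin n,
      (x ℓ / ((1 + x ℓ) * (1 + (p : ℂ) * x ℓ))) *
        ((∏ i, (x ℓ - y i)) * (∏ i, (y k - x i)) /
          ((x ℓ - y k) * deriv (fun z => ∏ i, (z - x i)) (x ℓ) *
            deriv (fun z => ∏ i, (z - y i)) (y k))) *
        ((1 + (p : ℂ) * y k) / y k) =
    -(1 / (1 - (p : ℂ))) *
      (((∏ i, ((0 : ℂ) - x i)) / (∏ i, ((0 : ℂ) - y i)) - 1) *
          (∏ i, (-1 / (p : ℂ) - y i)) / (∏ i, (-1 / (p : ℂ) - x i)) +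
        ((p : ℂ) - (∏ i, ((0 : ℂ) - x i)) / (∏ i, ((0 : ℂ) - y i))) *
          (∏ i, ((-1 : ℂ) - y i)) / (∏ i, ((-1 : ℂ) - x i)) +
        1 - (p : ℂ)) := by
  have hp0 : (p : ℂ) ≠ 0 := by exact_mod_cast hp.ne'
  have key := sum_sum_residueTerm_neg_one_neg_one_div hx hy hxy hy0 hp0
    (by exact_mod_cast hp1.ne) hx1 hy1 hxp hyp
  simp only [← eval_nodal, Polynomial.deriv]
  simpa only [residueTerm_neg_one_neg_one_div hp0] using key

/-- Residue evaluation of the double sum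
`∑_{k,ℓ} [x_ℓ/((1+x_ℓ)(1+px_ℓ))]·[B(x_ℓ)A(y_k)/((x_ℓ−y_k)A'(x_ℓ)B'(y_k))]·[(1+py_k)/y_k]`,
with `A(z)=∏(z−x_i)`, `B(z)=∏(z−y_i)`. -/
theorem residue_double_sum (n : ℕ) (p : ℝ) (hp : 0 < p) (hp1 : p < 1)
    (x y : Fin n → ℂ)
    (hx : Function.Injective x) (hy : Function.Injective y)
    (hxy : ∀ i j, x i ≠ y j)
    (hx0 : ∀ i, x i ≠ 0) (hy0 : ∀ i, y i ≠ 0)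
    (hx1 : ∀ i, x i ≠ -1) (hy1 : ∀ i, y i ≠ -1)
    (hxp : ∀ i, x i ≠ -1 / (p : ℂ)) (hyp : ∀ i, y i ≠ -1 / (p : ℂ)) :
    ∑ k : Fin n, ∑ ℓ : Fin n,
      (x ℓ / ((1 + x ℓ) * (1 + (p : ℂ) * x ℓ))) *
        ((∏ i, (x ℓ - y i)) * (∏ i, (y k - x i)) /
          ((x ℓ - y k) * deriv (fun z => ∏ i, (z - x i)) (x ℓ) *
            deriv (fun z => ∏ i, (z - y i)) (y k))) *
        ((1 + (p : ℂ) * y k) / y k) =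
    -(1 / (1 - (p : ℂ))) *
      (((∏ i, ((0 : ℂ) - x i)) / (∏ i, ((0 : ℂ) - y i)) - 1) *
          (∏ i, (-1 / (p : ℂ) - y i)) / (∏ i, (-1 / (p : ℂ) - x i)) +
        ((p : ℂ) - (∏ i, ((0 : ℂ) - x i)) / (∏ i, ((0 : ℂ) - y i))) *
          (∏ i, ((-1 : ℂ) - y i)) / (∏ i, ((-1 : ℂ) - x i)) +
        1 - (p : ℂ)) :=
  residue_double_sum_general n p hp hp1 x y hx hy hxy hy0 hx1 hy1 hxp hyp
end

section
/- Let 0 < p < 1, N < L positive integers, and let w_1,…,w_N be complex numbers each satisfying the Bethe equation w^N (1+w)^{L−N} = z^L (1+p w)^N for a fixed nonzero z (with w_i ∉ {0,−1,−1/p}). For a configuration x = (x_1,…,x_N) ∈ ℤ^N with x_N + L > x_1 > x_2 > ⋯ > x_N, define the right eigenfunction Ψ^r_x(w) = ∏_{i=1}^N (1 − p·1[x_{i−1}−x_i=1]) · det[(w_i/(1+p w_i))^{1−j} (1+w_i)^{−x_{N−j+1}+j−1}]_{i,j=1}^N, where x_0 := x_N + L. Then for any 0 ≤ k ≤ N−1,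 with x' := (x_{N−k+1}+L,…,x_N+L, x_1,…,x_{N−k}), one has Ψ^r_x(w) = (−1)^{k(N−1)} z^{kL} ∏_{i=1}^N [((1+p w_i)/w_i)^k (1+w_i)^k] · Ψ^r_{x'}(w). -/
/-!
With `v_i = w_i / (1 + p w_i)` and `u_i = 1 + w_i`, shifting the configuration by one step moves
each column of the determinant one place to the right, row `i` acquiring the factor `u_i / v_i`;
the column that wraps around acquires in addition `v_i ^ N u_i ^ (L - N)`, which the Bethe
equation turns into the row-independent constant `z ^ L`. Rotating the columns back costs
`(-1) ^ (N - 1)`, and the prefactor is unchanged because the gaps of the configuration are merely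
rotated. Iterating `k` times gives the theorem.
-/

open scoped BigOperators

/-- The right eigenfunction `Ψ^r_x(w)` of discrete-time parallel periodic TASEP with
`M+1` particles (0-based indexing: particle `i` here is paper particle `i+1`, and the
cyclic convention `x_0 = x_{M+1} + L` is implemented by the `i = 0` case). -/
noncomputable def PsiR (L : ℕ) (p : ℝ) {M : ℕ} (x : Fin (M + 1) → ℤ)
    (w : Fin (M + 1) → ℂ) : ℂ :=
  (∏ i : Fin (M + 1),
      (1 - (p : ℂ) *
        (if (if i = 0 then x (Fin.last M) + (L : ℤ) else x (i - 1)) - x i = 1 then 1 else 0))) *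
    Matrix.det (Matrix.of fun i j : Fin (M + 1) =>
      (w i / (1 + (p : ℂ) * w i)) ^ (-(j : ℤ)) * (1 + w i) ^ (-(x j.rev) + (j : ℤ)))

open Finset Matrix

lemma Fin.zero_sub_one_eq_last (M : ℕ) : (0 : Fin (M + 1)) - 1 = Fin.last M := by
  rw [zero_sub, neg_eq_iff_eq_neg, Fin.neg_last]

section CyclicShift

variable {M : ℕ}

/-- `cyclicShift L x i` is the paper's `x_{i-1}` with the convention `x_0 = x_N + L`; read as a
configuration, it is `x` shifted cyclically by one step. -/
def cyclicShift (L : ℕ) (x : Fin (M + 1) → ℤ) (i : Fin (M + 1)) : ℤ :=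
  if i = 0 then x (Fin.last M) + (L : ℤ) else x (i - 1)

variable {L : ℕ} {x : Fin (M + 1) → ℤ}

@[simp]
lemma cyclicShift_zero : cyclicShift L x 0 = x (Fin.last M) + L := if_pos rfl

lemma cyclicShift_of_ne_zero {i : Fin (M + 1)} (hi : i ≠ 0) : cyclicShift L x i = x (i - 1) :=
  if_neg hi

lemma cyclicShift_cyclicShift_sub (i : Fin (M + 1)) :
    cyclicShift L (cyclicShift L x) i - cyclicShift L x i =
      cyclicShift L x (i - 1) - x (i - 1) := by
  by_cases hi : i = 0
  · subst hi
    rw [cyclicShift_zero, cyclicShift_zero, Fin.zero_sub_one_eq_last]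
    ring
  · rw [cyclicShift_of_ne_zero hi, cyclicShift_of_ne_zero hi]

lemma prod_cyclicShift_sub_cyclicShift {α : Type*} [CommMonoid α] (f : ℤ → α) :
    ∏ i, f (cyclicShift L (cyclicShift L x) i - cyclicShift L x i) =
      ∏ i, f (cyclicShift L x i - x i) := by
  simp_rw [cyclicShift_cyclicShift_sub]
  exact Fintype.prod_equiv (Equiv.subRight 1) _ _ fun _ => rfl

lemma cyclicShift_iterate_apply {k : ℕ} (hk : k ≤ M + 1) (j : Fin (M + 1)) :
    (cyclicShift L)^[k] x j =
      if h : (j : ℕ) < k then x ⟨M + 1 - k + j, by omega⟩ + L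
      else x ⟨j - k, by omega⟩ := by
  induction k generalizing j with
  | zero => simp
  | succ n ih =>
    rw [Function.iterate_succ_apply']
    by_cases hj : j = 0
    · subst hj
      have hlast : ¬((Fin.last M : Fin (M + 1)) : ℕ) < n := by rw [Fin.val_last]; omega
      rw [cyclicShift_zero, ih (by omega), dif_neg hlast, dif_pos (by simp)]
      congr 2
      ext
      simp only [Fin.val_last, Fin.val_zero]
      omega
    · have hpos := Fin.pos_of_ne_zero hj
      have hsub : ((j - 1 : Fin (M + 1)) : ℕ) = j - 1 := by rw [Fin.coe_sub_one, if_neg hj]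
      rw [cyclicShift_of_ne_zero hj, ih (by omega)]
      by_cases hjn : (j : ℕ) < n + 1
      · rw [dif_pos (by omega), dif_pos hjn]
        congr 2
        ext
        simp only [hsub]
        omega
      · rw [dif_neg (by omega), dif_neg hjn]
        congr 2
        simp only [hsub]
        omega

end CyclicShift

section Matrix

variable {K : Type*} [Field K] {M : ℕ}

def psiMatrix (v u : Fin (M + 1) → K) (x : Fin (M + 1) → ℤ) :
    Matrix (Fin (M + 1)) (Fin (M + 1)) K :=
  of fun i j => v i ^ (-(j : ℤ)) * u i ^ (-(x j.rev) + (j : ℤ))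

lemma div_mul_zpow_mul_zpow {u v : K} (hu : u ≠ 0) (hv : v ≠ 0) (a b : ℤ) :
    u / v * (v ^ a * u ^ b) = v ^ (a - 1) * u ^ (b + 1) := by
  rw [zpow_sub_one₀ hv, zpow_add_one₀ hu]
  ring

variable {L : ℕ} {v u : Fin (M + 1) → K} {c : K}

lemma psiMatrix_apply_eq_mul_cyclicShift (hu : ∀ i, u i ≠ 0) (hv : ∀ i, v i ≠ 0)
    (hc : ∀ i, v i ^ (M + 1) * u i ^ ((L : ℤ) - (M + 1 : ℕ)) = c)
    (x : Fin (M + 1) → ℤ) (i j : Fin (M + 1)) :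
    psiMatrix v u x i j =
      u i / v i * psiMatrix v u (cyclicShift L x) i (j - 1) * if j = 0 then c else 1 := by
  by_cases hj : j = 0
  · subst hj
    rw [if_pos rfl, ← hc i, Fin.zero_sub_one_eq_last]
    simp only [psiMatrix, of_apply, Fin.rev_zero, Fin.rev_last, cyclicShift_zero, Fin.val_last,
      Fin.val_zero]
    push_cast
    simp only [zpow_add₀ (hu i), zpow_sub₀ (hu i), _root_.zpow_neg, zpow_natCast, zpow_zero,
      neg_zero]
    have hui := hu i
    have hvi := hv i
    field_simp
    ring
  · have hrev : (j - 1).rev - 1 = j.rev := by rw [Fin.rev_sub, add_sub_cancel_right]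
    have hrev0 : (j - 1).rev ≠ 0 := by
      rwa [Fin.rev_ne_iff, Fin.rev_zero, Ne, sub_eq_iff_eq_add, Fin.last_add_one]
    have hcast : ((j - 1 : Fin (M + 1)) : ℤ) = j - 1 := by
      rw [Fin.coe_sub_one, if_neg hj]
      have := Fin.pos_of_ne_zero hj
      omega
    rw [if_neg hj, mul_one, psiMatrix, psiMatrix, of_apply, of_apply, cyclicShift_of_ne_zero hrev0,
      hrev, hcast, div_mul_zpow_mul_zpow (hu i) (hv i)]
    congr 2 <;> ring

lemma det_psiMatrix_eq_mul_cyclicShift (hu : ∀ i, u i ≠ 0) (hv : ∀ i, v i ≠ 0)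
    (hc : ∀ i, v i ^ (M + 1) * u i ^ ((L : ℤ) - (M + 1 : ℕ)) = c) (x : Fin (M + 1) → ℤ) :
    (psiMatrix v u x).det =
      (-1) ^ M * c * (∏ i, u i / v i) * (psiMatrix v u (cyclicShift L x)).det := by
  have hrot : psiMatrix v u x = diagonal (fun i => u i / v i) *
      (psiMatrix v u (cyclicShift L x)).submatrix id (finRotate (M + 1)).symm *
      diagonal (fun j => if j = 0 then c else 1) := by
    ext i j
    rw [mul_diagonal, diagonal_mul, submatrix_apply, id, finRotate_symm_apply,
      psiMatrix_apply_eq_mul_cyclicShift hu hv hc]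
  rw [hrot, det_mul, det_mul, det_diagonal, det_diagonal, det_permute', Equiv.Perm.sign_symm,
    sign_finRotate, Fintype.prod_ite_eq']
  push_cast
  ring

end Matrix

lemma div_pow_mul_zpow_eq_of_pow_mul_pow_eq {K : Type*} [Field K] {a b c z : K} {n L : ℕ}
    (hnL : n ≤ L) (hb : b ≠ 0) (h : a ^ n * c ^ (L - n) = z ^ L * b ^ n) :
    (a / b) ^ n * c ^ ((L : ℤ) - n) = z ^ L := by
  rw [← Nat.cast_sub hnL, zpow_natCast, div_pow, div_mul_eq_mul_div, h]
  field_simp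

lemma eq_pow_mul_apply_iterate {α β : Type*} [Monoid β] {f : α → β} {g : α → α} {C : β}
    (h : ∀ a, f a = C * f (g a)) (k : ℕ) (a : α) : f a = C ^ k * f (g^[k] a) := by
  induction k with
  | zero => simp
  | succ k ih => rw [ih, Function.iterate_succ_apply', h (g^[k] a), pow_succ, mul_assoc]

lemma PsiR_eq_prod_mul_det (L : ℕ) (p : ℝ) {M : ℕ} (x : Fin (M + 1) → ℤ)
    (w : Fin (M + 1) → ℂ) :
    PsiR L p x w = (∏ i, (1 - (p : ℂ) * if cyclicShift L x i - x i = 1 then 1 else 0)) *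
      (psiMatrix (fun i => w i / (1 + (p : ℂ) * w i)) (fun i => 1 + w i) x).det :=
  rfl

lemma PsiR_eq_mul_PsiR_cyclicShift (L : ℕ) (p : ℝ) {M : ℕ} (hML : M + 1 ≤ L) (z : ℂ)
    (w : Fin (M + 1) → ℂ) (hw0 : ∀ i, w i ≠ 0) (hw1 : ∀ i, w i ≠ -1)
    (hwp : ∀ i, 1 + (p : ℂ) * w i ≠ 0)
    (hbethe : ∀ i, w i ^ (M + 1) * (1 + w i) ^ (L - (M + 1)) =
      z ^ L * (1 + (p : ℂ) * w i) ^ (M + 1)) (x : Fin (M + 1) → ℤ) :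
    PsiR L p x w =
      (-1) ^ M * z ^ L * (∏ i, ((1 + (p : ℂ) * w i) / w i * (1 + w i))) *
        PsiR L p (cyclicShift L x) w := by
  have hu i : 1 + w i ≠ 0 := fun h => hw1 i (eq_neg_of_add_eq_zero_right h)
  have hv i : w i / (1 + (p : ℂ) * w i) ≠ 0 := div_ne_zero (hw0 i) (hwp i)
  have hdet := det_psiMatrix_eq_mul_cyclicShift hu hv
    (fun i => div_pow_mul_zpow_eq_of_pow_mul_pow_eq hML (hwp i) (hbethe i)) x
  have hprefactor := prod_cyclicShift_sub_cyclicShift (L := L) (x := x)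
    fun d => 1 - (p : ℂ) * if d = 1 then 1 else 0
  have hratio i : (1 + w i) / (w i / (1 + (p : ℂ) * w i)) = (1 + p * w i) / w i * (1 + w i) := by
    rw [div_div_eq_mul_div]
    ring
  simp only [hratio] at hdet
  rw [PsiR_eq_prod_mul_det, PsiR_eq_prod_mul_det, hdet, hprefactor]
  ring

/-- Cyclic-shift covariance of the right eigenfunction: for spectral parameters
satisfying the Bethe equation and a configuration `x` with
`x_{M+1} + L > x_1 > ⋯ > x_{M+1}`, shifting the configuration cyclically by `k`
(i.e. `x' = (x_{M+1−k+1}+L,…,x_{M+1}+L, x_1,…,x_{M+1−k})`) multiplies `Ψ^r` by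
`(−1)^{kM} z^{kL} ∏_i ((1+pw_i)/w_i)^k (1+w_i)^k`. -/
theorem psiR_cyclic_shift (L : ℕ) (p : ℝ)
    (M : ℕ) (hML : M + 1 < L) (z : ℂ)
    (x : Fin (M + 1) → ℤ)
    (w : Fin (M + 1) → ℂ)
    (hw0 : ∀ i, w i ≠ 0) (hw1 : ∀ i, w i ≠ -1) (hwp : ∀ i, 1 + (p : ℂ) * w i ≠ 0)
    (hbethe : ∀ i, w i ^ (M + 1) * (1 + w i) ^ (L - (M + 1)) =
      z ^ L * (1 + (p : ℂ) * w i) ^ (M + 1))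
    (k : ℕ) (hk : k ≤ M) :
    PsiR L p x w =
      (-1 : ℂ) ^ (k * M) * z ^ (k * L) *
        (∏ i : Fin (M + 1), (((1 + (p : ℂ) * w i) / w i) ^ k * (1 + w i) ^ k)) *
        PsiR L p
          (fun j => if h : (j : ℕ) < k
            then x ⟨M + 1 - k + (j : ℕ), by omega⟩ + (L : ℤ)
            else x ⟨(j : ℕ) - k, by have := j.isLt; omega⟩)
          w := by
  have hshift : (fun j : Fin (M + 1) => if h : (j : ℕ) < k
      then x ⟨M + 1 - k + (j : ℕ), by omega⟩ + (L : ℤ)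
      else x ⟨(j : ℕ) - k, by omega⟩) = (cyclicShift L)^[k] x :=
    funext fun j => (cyclicShift_iterate_apply (by omega) j).symm
  rw [hshift, eq_pow_mul_apply_iterate (f := fun y => PsiR L p y w)
    (PsiR_eq_mul_PsiR_cyclicShift L p hML.le z w hw0 hw1 hwp hbethe) k x,
    mul_pow, mul_pow, ← pow_mul, ← pow_mul, ← prod_pow]
  simp_rw [mul_pow, mul_comm k]
end

section
/- Let 0 < p < 1 and let G : ℤ^N → ℂ satisfy the discrete-time free evolution equation G(x, t+1) = ∑_{b ∈ {0,1}^N} ∏_{i=1}^N p^{b_i}(1−p)^{1−b_i} G(x − b, t) together with the boundary condition (1−p)[G(…, x_i+1, x_i, …, t) − G(…, x_i, x_i, …, t)] = p[G(…, x_i, x_i−1, …, t) − G(…, x_i+1, x_i−1, …, t)] (where in the two entries shown, positions i−1 and i of the argument vector are displayed). Then for any x ∈ ℤ^N such that the coordinates x_i, x_{i−1}, …, x_{i−m} satisfy x_i = x_{i−1} − 1 = ⋯ = x_{i−m} − m (a block of m+1 adjacent values), one has ∑_{b_i ∈{0,1}} p^{b_i}(1−p)^{1−b_i} G(x − b_i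 e_i, t) = ∑_{b_j ∈ {0,1}, j = i−m,…,i} ∏_j p^{b_j}(1−p)^{1−b_j} G(x − ∑_j b_j e_j, t), where e_j is the j-th standard basis vector. -/
/-!
The block update is the product of the commuting single-site updates. At a configuration with
`x j = x i + 1` for adjacent sites `j + 1 = i`, the boundary condition (multiplied by `p`) says
precisely that additionally updating site `j` leaves the single-site update at `i` unchanged.
Inside a block, the sites `i - m` and `i - (m - 1)` are untouched by the moves of the sites to
their right, so this gap persists, and the leftmost site of the block can be peeled off;
induction on `m` collapses the block update to the update at `i`.
-/

variable {R : Type*} [CommRing R] {N : ℕ}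

def bernoulliWeight (p : R) (b : Bool) : R := if b then p else 1 - p

def siteUpdate (p : R) (g : (Fin N → ℤ) → R) (a : Fin N) (x : Fin N → ℤ) : R :=
  ∑ b : Bool, bernoulliWeight p b * g (x - if b then Pi.single a 1 else 0)

def blockShift {k : ℕ} (pos : Fin k → Fin N) (c : Fin k → Bool) : Fin N → ℤ :=
  ∑ r, if c r then Pi.single (pos r) 1 else 0

def blockUpdate (p : R) (g : (Fin N → ℤ) → R) {k : ℕ} (pos : Fin k → Fin N)
    (x : Fin N → ℤ) : R :=
  ∑ c : Fin k → Bool, (∏ r, bernoulliWeight p (c r)) * g (x - blockShift pos c)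

def leftSite (i : Fin N) (r : ℕ) : Fin N :=
  ⟨i - r, (Nat.sub_le _ _).trans_lt i.isLt⟩

def BoundaryCondition (p : R) (g : (Fin N → ℤ) → R) : Prop :=
  ∀ (x : Fin N → ℤ) (i j : Fin N), (j : ℕ) + 1 = (i : ℕ) → ∀ y : ℤ,
    (1 - p) * (g (Function.update (Function.update x j (y + 1)) i y) -
        g (Function.update (Function.update x j y) i y)) =
      p * (g (Function.update (Function.update x j y) i (y - 1)) -
        g (Function.update (Function.update x j (y + 1)) i (y - 1)))

theorem update_update_eq_sub_single {ι M : Type*} [DecidableEq ι] [AddCommGroup M] {i j : ι}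
    (hji : j ≠ i) (x : ι → M) (u v : M) :
    Function.update (Function.update x j u) i v =
      x - Pi.single i (x i - v) - Pi.single j (x j - u) := by
  funext k
  by_cases hki : k = i
  · subst hki; simp [hji.symm]
  · by_cases hkj : k = j
    · subst hkj; simp [hki]
    · simp [hki, hkj]

theorem siteUpdate_siteUpdate_of_adjacent {p : R} {g : (Fin N → ℤ) → R}
    (hg : BoundaryCondition p g) {i j : Fin N} (hji : (j : ℕ) + 1 = i) {x : Fin N → ℤ}
    (hx : x j = x i + 1) :
    siteUpdate p (siteUpdate p g j) i x = siteUpdate p g i x := by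
  have hne : j ≠ i := fun h => by subst h; omega
  -- at `y = x i` the four configurations of the boundary condition are `x`, `x - e j`,
  -- `x - e i - e j` and `x - e i`
  have key := hg x i j hji (x i)
  simp only [update_update_eq_sub_single hne, hx] at key
  simp only [siteUpdate, bernoulliWeight, Fintype.sum_bool, if_true, Bool.false_eq_true, if_false,
    sub_zero] at key ⊢
  simp only [sub_self, Pi.single_zero, sub_zero, sub_sub_cancel, add_sub_cancel_left] at key
  linear_combination (-p) * key

theorem blockUpdate_succ (p : R) (g : (Fin N → ℤ) → R) {k : ℕ} (pos : Fin (k + 1) → Fin N)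
    (x : Fin N → ℤ) :
    blockUpdate p g pos x =
      blockUpdate p (siteUpdate p g (pos (Fin.last k))) (pos ∘ Fin.castSucc) x := by
  rw [blockUpdate, ← (Fin.snocEquiv fun _ => Bool).sum_comp, Fintype.sum_prod_type_right]
  refine Fintype.sum_congr _ _ fun d => ?_
  simp only [siteUpdate, blockShift, Finset.mul_sum, Fin.snocEquiv_apply, Fin.prod_univ_castSucc,
    Fin.sum_univ_castSucc, Fin.snoc_castSucc, Fin.snoc_last, Function.comp_apply, sub_sub]
  refine Fintype.sum_congr _ _ fun b => ?_
  ring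

theorem blockUpdate_congr {p : R} {g g' : (Fin N → ℤ) → R} {k : ℕ} {pos : Fin k → Fin N}
    {x : Fin N → ℤ} (h : ∀ c, g (x - blockShift pos c) = g' (x - blockShift pos c)) :
    blockUpdate p g pos x = blockUpdate p g' pos x :=
  Fintype.sum_congr _ _ fun c => by rw [h]

theorem blockShift_apply_of_forall_ne {k : ℕ} {pos : Fin k → Fin N} (c : Fin k → Bool) {a : Fin N}
    (ha : ∀ r, pos r ≠ a) : blockShift pos c a = 0 := by
  simp only [blockShift, Finset.sum_apply]
  refine Finset.sum_eq_zero fun r _ => ?_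
  cases c r <;> simp [(ha r).symm]

theorem blockUpdate_one (p : R) (g : (Fin N → ℤ) → R) (pos : Fin 1 → Fin N) (x : Fin N → ℤ) :
    blockUpdate p g pos x = siteUpdate p g (pos 0) x := by
  rw [blockUpdate_succ]
  simp [blockUpdate, blockShift]

theorem siteUpdate_eq_blockUpdate {p : R} {g : (Fin N → ℤ) → R} (hg : BoundaryCondition p g)
    (x : Fin N → ℤ) (i : Fin N) (m : ℕ) (hm : m ≤ i)
    (hx : ∀ r : Fin (m + 1), x (leftSite i r) = x i + r) :
    siteUpdate p g i x = blockUpdate p g (fun r : Fin (m + 1) => leftSite i r) x := by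
  induction m with
  | zero => exact (blockUpdate_one p g (fun r => leftSite i r) x).symm
  | succ n ih =>
    have hblock : ∀ c, (x - blockShift (fun r : Fin n => leftSite i r) c) (leftSite i (n + 1)) =
        (x - blockShift (fun r : Fin n => leftSite i r) c) (leftSite i n) + 1 := by
      intro c
      have hfar : ∀ s, n ≤ s → ∀ r : Fin n, leftSite i r ≠ leftSite i s := fun s hs r h => by
        have := congrArg Fin.val h
        simp only [leftSite] at this
        omega
      have hlast : x (leftSite i (n + 1)) = x i + (n + 1 : ℕ) := hx (Fin.last _)
      simp only [Pi.sub_apply, blockShift_apply_of_forall_ne c (hfar _ le_rfl),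
        blockShift_apply_of_forall_ne c (hfar _ n.le_succ), hlast, hx ⟨n, by omega⟩]
      push_cast
      ring
    calc siteUpdate p g i x
        = blockUpdate p g (fun r : Fin (n + 1) => leftSite i r) x :=
          ih (by omega) fun r => hx r.castSucc
      _ = blockUpdate p (siteUpdate p g (leftSite i n)) (fun r : Fin n => leftSite i r) x :=
          blockUpdate_succ ..
      _ = blockUpdate p (siteUpdate p (siteUpdate p g (leftSite i (n + 1))) (leftSite i n))
            (fun r : Fin n => leftSite i r) x :=
          blockUpdate_congr fun c =>
            (siteUpdate_siteUpdate_of_adjacent hg (by simp [leftSite]; omega) (hblock c)).symm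
      _ = blockUpdate p g (fun r : Fin (n + 2) => leftSite i r) x := by
          rw [blockUpdate_succ p g, blockUpdate_succ]
          rfl

/-- Cluster reduction for the free evolution with boundary conditions: if
`G : ℤ^N × ℕ → ℂ` satisfies the discrete-time free evolution equation
`G(x,t+1) = ∑_{b∈{0,1}^N} ∏_i p^{b_i}(1−p)^{1−b_i} G(x−b,t)` and the boundary
condition
`(1−p)[G(…,y+1,y,…) − G(…,y,y,…)] = p[G(…,y,y−1,…) − G(…,y+1,y−1,…)]`
(values displayed at adjacent positions `i−1, i`), then for any `x` whose
coordinates at positions `i−m,…,i` form a block `x_i = x_{i−1}−1 = ⋯ = x_{i−m}−m`,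
the one-site update of coordinate `i` equals the full product update of the block:
`∑_{b_i∈{0,1}} p^{b_i}(1−p)^{1−b_i} G(x − b_i e_i, t)
 = ∑_{b_j∈{0,1}, j=i−m,…,i} ∏_j p^{b_j}(1−p)^{1−b_j} G(x − ∑_j b_j e_j, t)`. -/
theorem cluster_reduction (N : ℕ) (p : ℝ)
    (G : (Fin N → ℤ) → ℕ → ℂ)
    (hbc : ∀ (x : Fin N → ℤ) (t : ℕ) (i j : Fin N), (j : ℕ) + 1 = (i : ℕ) → ∀ y : ℤ,
      (1 - (p : ℂ)) *
          (G (Function.update (Function.update x j (y + 1)) i y) t -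
            G (Function.update (Function.update x j y) i y) t) =
        (p : ℂ) *
          (G (Function.update (Function.update x j y) i (y - 1)) t -
            G (Function.update (Function.update x j (y + 1)) i (y - 1)) t))
    (x : Fin N → ℤ) (t : ℕ) (i : Fin N) (m : ℕ) (hm : m ≤ (i : ℕ))
    (hx : ∀ r : Fin (m + 1),
      x ⟨(i : ℕ) - (r : ℕ), by have := i.isLt; omega⟩ = x i + (r : ℕ)) :
    ∑ b : Bool, (if b then (p : ℂ) else 1 - (p : ℂ)) *
        G (x - if b then Pi.single i 1 else 0) t =
      ∑ c : Fin (m + 1) → Bool,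
        (∏ r, if c r then (p : ℂ) else 1 - (p : ℂ)) *
          G (x - ∑ r : Fin (m + 1),
              if c r then
                Pi.single (⟨(i : ℕ) - (r : ℕ), by have := i.isLt; omega⟩ : Fin N) (1 : ℤ)
              else 0) t :=
  siteUpdate_eq_blockUpdate (p := (p : ℂ)) (g := (G · t)) (fun x => hbc x t) x i m hm hx
end
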